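/- Let T^(1) = T(ℓ_1, s_1), …, T^(L) = T(ℓ_L, s_L) with delay indices ℓ_1, …, ℓ_L ∈ {0,…,M−1} that are pairwise distinct, and arbitrary real Doppler exponents s_i. Then for every row index r ∈ {0,…,MN−1} and all i ≠ j: χ^{ij} := |[T^(i) T^(j)†]_{(r,r)}|² = 0 and κ^{ij} := |∑_{r'≠r} [T^(i) T^(j)†]_{(r,r')}|² = 1 (the claim of Remark 2, combining Lemmas 2 and 3). -/

import Mathlib

open Matrix

noncomputable section

/-- Entry of the `N`-point unitary DFT matrix, written with natural-number indices:
`(F_N)_{a,b} = (1/√N) exp(-2πi a b / N)`. -/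
def dftEntry (N a b : ℕ) : ℂ :=
  (((Real.sqrt N)⁻¹ : ℝ) : ℂ) *
    Complex.exp (-(2 * Real.pi * Complex.I) * (a : ℂ) * (b : ℂ) / (N : ℂ))

/-- The Kronecker product `F_N ⊗ I_M`, realised on `Fin (M*N)` via the
correspondence `u ↔ (u / M, u % M)` (index `u` encodes the pair
`(a,b) = (u / M, u % M)` as `u = a·M + b`). -/
def FkronI (M N : ℕ) : Matrix (Fin (M * N)) (Fin (M * N)) ℂ :=
  Matrix.of fun u v =>
    if (u : ℕ) % M = (v : ℕ) % M then dftEntry N ((u : ℕ) / M) ((v : ℕ) / M) else 0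

/-- The cyclic-shift permutation matrix `Π` of size `K`:
`Π_{u,v} = 1` iff `u ≡ v + 1 (mod K)`. -/
def cyclicShift (K : ℕ) : Matrix (Fin K) (Fin K) ℂ :=
  Matrix.of fun u v => if ((v : ℕ) + 1) % K = (u : ℕ) then 1 else 0

/-- The diagonal matrix `Δ^s` of size `K`, with `(Δ^s)_{j,j} = exp(2πi s j / K)`. -/
def deltaPow (K : ℕ) (s : ℝ) : Matrix (Fin K) (Fin K) ℂ :=
  Matrix.diagonal fun j => Complex.exp (2 * Real.pi * Complex.I * (s : ℂ) * ((j : ℕ) : ℂ) / (K : ℂ))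

/-- The OTFS delay–Doppler matrix `T(ℓ,s) = (F_N ⊗ I_M) Π^ℓ Δ^s (F_N^† ⊗ I_M)`. -/
def Tmat (M N : ℕ) (ℓ : ℕ) (s : ℝ) : Matrix (Fin (M * N)) (Fin (M * N)) ℂ :=
  FkronI M N * (cyclicShift (M * N)) ^ ℓ * deltaPow (M * N) s * (FkronI M N)ᴴ

/-! `A = F_N ⊗ I_M` is unitary, so `T(ℓ,s) T(ℓ',s')† = G G'†` with `G = A Π^ℓ Δ^s`, whose
`(r, w)` entry is `A_{r, w+ℓ} (Δ^s)_{w,w}` (indices mod `MN`). Since `A_{r,u} = 0` unless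
`u ≡ r (mod M)`, a diagonal term of `G G'†` would force `ℓ ≡ ℓ' (mod M)`. For the row sums,
the columns of `conj A` sum to `√N` on the first `M` columns and to `0` on the others, and
exactly one `w` has `w + ℓ'` among the first `M` indices and `w + ℓ ≡ r (mod M)`; that single
term has modulus `(1/√N) · 1 · √N = 1`. -/

section DFT

def dftMatrix (N : ℕ) : Matrix (Fin N) (Fin N) ℂ :=
  Matrix.of fun a b => dftEntry N a b

lemma dftEntry_eq_inv_pow (N a b : ℕ) :
    dftEntry N a b =
      (((Real.sqrt N)⁻¹ : ℝ) : ℂ) * (Complex.exp (2 * Real.pi * Complex.I / N) ^ (a * b))⁻¹ := by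
  rw [dftEntry, ← Complex.exp_nat_mul, ← Complex.exp_neg]
  congr 2
  push_cast
  ring

lemma star_dftEntry (N a b : ℕ) :
    star (dftEntry N a b) =
      (((Real.sqrt N)⁻¹ : ℝ) : ℂ) * Complex.exp (2 * Real.pi * Complex.I / N) ^ (a * b) := by
  rw [dftEntry, ← Complex.exp_nat_mul, star_mul', Complex.star_def, ← Complex.exp_conj]
  simp only [Complex.conj_ofReal, map_div₀, map_mul, map_neg, Complex.conj_I, map_natCast,
    map_ofNat]
  congr 2
  push_cast
  ring

lemma norm_dftEntry (N a b : ℕ) : ‖dftEntry N a b‖ = (Real.sqrt N)⁻¹ := by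
  have harg : -(2 * Real.pi * Complex.I) * (a : ℂ) * (b : ℂ) / (N : ℂ) =
      ((-(2 * Real.pi * a * b / N) : ℝ) : ℂ) * Complex.I := by
    push_cast
    ring
  rw [dftEntry, norm_mul, harg, Complex.norm_exp_ofReal_mul_I, mul_one, Complex.norm_real,
    Real.norm_of_nonneg (by positivity)]

lemma sum_pow_eq_zero_of_pow_eq_one {z : ℂ} {n : ℕ} (hz : z ^ n = 1) (h1 : z ≠ 1) :
    ∑ a : Fin n, z ^ (a : ℕ) = 0 := by
  rw [Fin.sum_univ_eq_sum_range (z ^ ·), geom_sum_eq h1, hz, sub_self, zero_div]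

lemma dftMatrix_conjTranspose_mul_self (N : ℕ) : (dftMatrix N)ᴴ * dftMatrix N = 1 := by
  rcases Nat.eq_zero_or_pos N with rfl | hN
  · exact Subsingleton.elim _ _
  have hζ := Complex.isPrimitiveRoot_exp N hN.ne'
  set ζ := Complex.exp (2 * Real.pi * Complex.I / N)
  have hsqrt : (((Real.sqrt N)⁻¹ : ℝ) : ℂ) * (((Real.sqrt N)⁻¹ : ℝ) : ℂ) = (N : ℂ)⁻¹ := by
    rw [← Complex.ofReal_mul, ← mul_inv, Real.mul_self_sqrt (Nat.cast_nonneg N)]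
    push_cast
    rfl
  have hterm : ∀ a x y : Fin N, star (dftEntry N a x) * dftEntry N a y =
      (N : ℂ)⁻¹ * (ζ ^ (x : ℕ) * (ζ ^ (y : ℕ))⁻¹) ^ (a : ℕ) := by
    intro a x y
    rw [star_dftEntry, dftEntry_eq_inv_pow, mul_mul_mul_comm, hsqrt, mul_pow, inv_pow,
      ← pow_mul, ← pow_mul, mul_comm (x : ℕ), mul_comm (y : ℕ)]
  ext x y
  simp only [mul_apply, conjTranspose_apply, dftMatrix, of_apply, hterm, ← Finset.mul_sum,
    one_apply]
  by_cases hxy : x = y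
  · subst hxy
    simp only [mul_inv_cancel₀ (pow_ne_zero _ (hζ.ne_zero hN.ne')), one_pow, if_true]
    rw [Finset.sum_const, Finset.card_univ, Fintype.card_fin, nsmul_eq_mul, mul_one,
      inv_mul_cancel₀ (Nat.cast_ne_zero.2 hN.ne')]
  · rw [if_neg hxy, sum_pow_eq_zero_of_pow_eq_one, mul_zero]
    · rw [mul_pow, inv_pow, ← pow_mul, ← pow_mul, mul_comm (x : ℕ), mul_comm (y : ℕ), pow_mul,
        pow_mul, hζ.pow_eq_one, one_pow, one_pow, inv_one, mul_one]
    · intro h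
      exact hxy (Fin.ext (hζ.pow_inj x.isLt y.isLt (mul_inv_eq_one₀ (pow_ne_zero _
        (hζ.ne_zero hN.ne')) |>.1 h)))

lemma sum_star_dftEntry {N : ℕ} (hN : 0 < N) (b : Fin N) :
    ∑ a : Fin N, star (dftEntry N a b) = if (b : ℕ) = 0 then ((Real.sqrt N : ℝ) : ℂ) else 0 := by
  -- the zeroth column of `F_N` is constant, so this is `√N` times an entry of `F_N† F_N`
  have hcol : ∀ a : Fin N, dftEntry N a 0 = (((Real.sqrt N)⁻¹ : ℝ) : ℂ) := by
    simp [dftEntry]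
  have hunit := congrFun (congrFun (dftMatrix_conjTranspose_mul_self N) b) ⟨0, hN⟩
  simp only [mul_apply, conjTranspose_apply, dftMatrix, of_apply, hcol, one_apply,
    ← Finset.sum_mul, Fin.ext_iff] at hunit
  have hsqrt : ((Real.sqrt N : ℝ) : ℂ) ≠ 0 := by
    exact_mod_cast (Real.sqrt_pos.2 (Nat.cast_pos.2 hN)).ne'
  push_cast at hunit
  rw [← inv_mul_cancel_right₀ hsqrt (∑ a : Fin N, star (dftEntry N a b)), hunit]
  split_ifs <;> simp

end DFT

open scoped Kronecker Fin.NatCast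

section Kronecker

variable (M N : ℕ)

lemma FkronI_eq_submatrix_kronecker :
    FkronI M N = (dftMatrix N ⊗ₖ (1 : Matrix (Fin M) (Fin M) ℂ)).submatrix
      ((finCongr (Nat.mul_comm M N)).trans finProdFinEquiv.symm)
      ((finCongr (Nat.mul_comm M N)).trans finProdFinEquiv.symm) := by
  ext u v
  simp [FkronI, dftMatrix, one_apply, Fin.ext_iff]

lemma FkronI_conjTranspose_mul_self : (FkronI M N)ᴴ * FkronI M N = 1 := by
  rw [FkronI_eq_submatrix_kronecker, conjTranspose_submatrix, submatrix_mul_equiv,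
    conjTranspose_kronecker, ← mul_kronecker_mul, dftMatrix_conjTranspose_mul_self,
    conjTranspose_one, Matrix.one_mul, one_kronecker_one, submatrix_one_equiv]

variable {M N}

lemma sum_star_FkronI_apply (hM : 0 < M) (hN : 0 < N) (v : Fin (M * N)) :
    ∑ u, star (FkronI M N u v) = if (v : ℕ) < M then ((Real.sqrt N : ℝ) : ℂ) else 0 := by
  rw [FkronI_eq_submatrix_kronecker, ← ((finCongr (Nat.mul_comm M N)).trans
    finProdFinEquiv.symm).symm.sum_comp, Fintype.sum_prod_type]
  simp only [submatrix_apply, Equiv.apply_symm_apply, kroneckerMap_apply, one_apply, mul_ite,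
    mul_one, mul_zero, apply_ite star, star_zero, Finset.sum_ite_eq',
    Finset.mem_univ, if_true, dftMatrix, of_apply]
  rw [sum_star_dftEntry hN]
  simp [Nat.div_eq_zero_iff, hM.ne']

lemma FkronI_apply_of_natCast_ne {u v : Fin (M * N)}
    (h : ((u : ℕ) : ZMod M) ≠ ((v : ℕ) : ZMod M)) : FkronI M N u v = 0 := by
  rw [FkronI, of_apply, if_neg (mt (ZMod.natCast_eq_natCast_iff' _ _ _).2 h)]

lemma norm_FkronI_apply_of_natCast_eq {u v : Fin (M * N)}
    (h : ((u : ℕ) : ZMod M) = ((v : ℕ) : ZMod M)) : ‖FkronI M N u v‖ = (Real.sqrt N)⁻¹ := by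
  rw [FkronI, of_apply, if_pos ((ZMod.natCast_eq_natCast_iff' _ _ _).1 h), norm_dftEntry]

end Kronecker

section Shift

variable {K : ℕ} [NeZero K]

lemma natCast_val_add_natCast {M : ℕ} (hMK : M ∣ K) (w : Fin K) (ℓ : ℕ) :
    (((w + (ℓ : Fin K) : Fin K) : ℕ) : ZMod M) = (w : ℕ) + ℓ := by
  have hmod : ∀ x : ℕ, ((x % K : ℕ) : ZMod M) = x := fun x =>
    (ZMod.natCast_eq_natCast_iff' _ _ _).2 (Nat.mod_mod_of_dvd x hMK)
  rw [Fin.val_add, Fin.val_natCast, hmod, Nat.cast_add, hmod]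

lemma cyclicShift_apply (u v : Fin K) : cyclicShift K u v = if u = v + 1 then 1 else 0 := by
  simp only [cyclicShift, of_apply, Fin.ext_iff, Fin.val_add, Fin.val_one', Nat.add_mod_mod,
    eq_comm]

lemma cyclicShift_pow_apply (ℓ : ℕ) (u v : Fin K) :
    (cyclicShift K ^ ℓ) u v = if u = v + (ℓ : Fin K) then 1 else 0 := by
  induction ℓ generalizing v with
  | zero => simp [one_apply]
  | succ n ih =>
    simp only [pow_succ, mul_apply, cyclicShift_apply, mul_ite, mul_one, mul_zero,
      Finset.sum_ite_eq', Finset.mem_univ, if_true]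
    rw [ih, Nat.cast_succ, add_comm (n : Fin K), add_assoc]

lemma mul_cyclicShift_pow_apply {m : Type*} (A : Matrix m (Fin K) ℂ) (ℓ : ℕ) (r : m)
    (w : Fin K) : (A * cyclicShift K ^ ℓ) r w = A r (w + (ℓ : Fin K)) := by
  simp [mul_apply, cyclicShift_pow_apply]

end Shift

lemma mul_deltaPow_apply {m : Type*} {K : ℕ} (A : Matrix m (Fin K) ℂ) (s : ℝ) (r : m)
    (w : Fin K) : (A * deltaPow K s) r w = A r w * deltaPow K s w w := by
  rw [deltaPow, mul_diagonal, diagonal_apply_eq]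

lemma norm_deltaPow_apply_self (K : ℕ) (s : ℝ) (j : Fin K) : ‖deltaPow K s j j‖ = 1 := by
  have harg : 2 * Real.pi * Complex.I * (s : ℂ) * ((j : ℕ) : ℂ) / (K : ℂ) =
      ((2 * Real.pi * s * (j : ℕ) / K : ℝ) : ℂ) * Complex.I := by
    push_cast
    ring
  rw [deltaPow, diagonal_apply_eq, harg, Complex.norm_exp_ofReal_mul_I]

section Tmat

variable {M N : ℕ}

lemma Tmat_mul_conjTranspose_apply [NeZero (M * N)] (ℓ ℓ' : ℕ) (s s' : ℝ)
    (r r' : Fin (M * N)) :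
    (Tmat M N ℓ s * (Tmat M N ℓ' s')ᴴ) r r' =
      ∑ w, FkronI M N r (w + (ℓ : Fin (M * N))) * deltaPow (M * N) s w w *
        star (FkronI M N r' (w + (ℓ' : Fin (M * N))) * deltaPow (M * N) s' w w) := by
  have hunitary : Tmat M N ℓ s * (Tmat M N ℓ' s')ᴴ =
      (FkronI M N * cyclicShift (M * N) ^ ℓ * deltaPow (M * N) s) *
        (FkronI M N * cyclicShift (M * N) ^ ℓ' * deltaPow (M * N) s')ᴴ := by
    simp only [Tmat, conjTranspose_mul, conjTranspose_conjTranspose, Matrix.mul_assoc]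
    rw [← Matrix.mul_assoc (FkronI M N)ᴴ, FkronI_conjTranspose_mul_self, Matrix.one_mul]
  rw [hunitary, mul_apply]
  simp only [conjTranspose_apply, mul_deltaPow_apply, mul_cyclicShift_pow_apply]

lemma Tmat_mul_conjTranspose_apply_self {ℓ ℓ' : ℕ} (hℓ : ℓ < M) (hℓ' : ℓ' < M) (hne : ℓ ≠ ℓ')
    (s s' : ℝ) (r : Fin (M * N)) : (Tmat M N ℓ s * (Tmat M N ℓ' s')ᴴ) r r = 0 := by
  have : NeZero (M * N) := NeZero.of_pos r.pos
  have hMK : M ∣ M * N := dvd_mul_right M N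
  rw [Tmat_mul_conjTranspose_apply]
  refine Finset.sum_eq_zero fun w _ => ?_
  by_cases h : ((r : ℕ) : ZMod M) = ((w + (ℓ : Fin (M * N)) : Fin (M * N)) : ℕ)
  · have h' : ((r : ℕ) : ZMod M) ≠ ((w + (ℓ' : Fin (M * N)) : Fin (M * N)) : ℕ) := by
      rw [h, natCast_val_add_natCast hMK, natCast_val_add_natCast hMK]
      intro heq
      simpa [ZMod.val_natCast_of_lt hℓ, ZMod.val_natCast_of_lt hℓ', hne] using
        congrArg ZMod.val (add_left_cancel heq)
    rw [FkronI_apply_of_natCast_ne h', zero_mul, star_zero, mul_zero]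
  · rw [FkronI_apply_of_natCast_ne h, zero_mul, zero_mul]

lemma sum_Tmat_mul_conjTranspose_apply [NeZero (M * N)] (hM : 0 < M) (hN : 0 < N)
    (ℓ ℓ' : ℕ) (s s' : ℝ) (r : Fin (M * N)) :
    ∑ r', (Tmat M N ℓ s * (Tmat M N ℓ' s')ᴴ) r r' =
      ∑ w, FkronI M N r (w + (ℓ : Fin (M * N))) * deltaPow (M * N) s w w *
        star (deltaPow (M * N) s' w w) *
          if ((w + (ℓ' : Fin (M * N)) : Fin (M * N)) : ℕ) < M then ((Real.sqrt N : ℝ) : ℂ)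
          else 0 := by
  simp only [Tmat_mul_conjTranspose_apply, star_mul', ← sum_star_FkronI_apply hM hN,
    Finset.mul_sum]
  rw [Finset.sum_comm]
  refine Finset.sum_congr rfl fun w _ => Finset.sum_congr rfl fun r' _ => ?_
  ring

lemma norm_sum_Tmat_mul_conjTranspose_apply (ℓ ℓ' : ℕ) (s s' : ℝ) (r : Fin (M * N)) :
    ‖∑ r', (Tmat M N ℓ s * (Tmat M N ℓ' s')ᴴ) r r'‖ = 1 := by
  have hK := r.pos
  have : NeZero (M * N) := NeZero.of_pos hK
  have hM : 0 < M := Nat.pos_of_ne_zero fun h => by simp [h] at hK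
  have hN : 0 < N := Nat.pos_of_ne_zero fun h => by simp [h] at hK
  have : NeZero M := NeZero.of_pos hM
  have hMK : M ∣ M * N := dvd_mul_right M N
  -- the unique `w` with `w + ℓ'` among the first `M` indices and `w + ℓ ≡ r (mod M)`
  set c : ZMod M := (r : ℕ) - ℓ + ℓ'
  set v₀ : Fin (M * N) := ⟨c.val, c.val_lt.trans_le (Nat.le_mul_of_pos_right M hN)⟩
  set w₀ := v₀ - (ℓ' : Fin (M * N))
  have hw₀ : w₀ + (ℓ' : Fin (M * N)) = v₀ := sub_add_cancel _ _
  have hw₀r : ((r : ℕ) : ZMod M) = ((w₀ + (ℓ : Fin (M * N)) : Fin (M * N)) : ℕ) := by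
    have hc := natCast_val_add_natCast hMK w₀ ℓ'
    rw [hw₀, ZMod.natCast_zmod_val] at hc
    rw [natCast_val_add_natCast hMK]
    linear_combination hc
  rw [sum_Tmat_mul_conjTranspose_apply hM hN, Finset.sum_eq_single w₀]
  · rw [hw₀, if_pos c.val_lt, norm_mul, norm_mul, norm_mul, norm_star,
      norm_FkronI_apply_of_natCast_eq hw₀r, norm_deltaPow_apply_self, norm_deltaPow_apply_self,
      Complex.norm_real, Real.norm_of_nonneg (Real.sqrt_nonneg _), mul_one, mul_one,
      inv_mul_cancel₀ (Real.sqrt_pos.2 (Nat.cast_pos.2 hN)).ne']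
  · intro w _ hw
    by_cases hlt : ((w + (ℓ' : Fin (M * N)) : Fin (M * N)) : ℕ) < M
    · have hwr : ((r : ℕ) : ZMod M) ≠ ((w + (ℓ : Fin (M * N)) : Fin (M * N)) : ℕ) := by
        intro hwr
        apply hw
        have hval : ((w + (ℓ' : Fin (M * N)) : Fin (M * N)) : ℕ) = c.val := by
          rw [← ZMod.val_natCast_of_lt hlt, natCast_val_add_natCast hMK]
          rw [natCast_val_add_natCast hMK] at hwr
          congr 1
          linear_combination -hwr
        exact add_right_cancel ((Fin.ext hval).trans hw₀.symm)
      rw [FkronI_apply_of_natCast_ne hwr, zero_mul, zero_mul, zero_mul]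
    · rw [if_neg hlt, mul_zero]
  · simp

end Tmat

open Finset in
theorem chi_eq_zero_and_kappa_eq_one_general (M N : ℕ)
    (L : ℕ) (ℓ : Fin L → ℕ) (hℓ : ∀ i, ℓ i < M)
    (hdist : ∀ i j : Fin L, i ≠ j → ℓ i ≠ ℓ j) (s : Fin L → ℝ) :
    ∀ (r : Fin (M * N)) (i j : Fin L), i ≠ j →
      ‖(Tmat M N (ℓ i) (s i) * (Tmat M N (ℓ j) (s j))ᴴ) r r‖ ^ 2 = 0 ∧
      ‖∑ r' ∈ Finset.univ \ {r},
        (Tmat M N (ℓ i) (s i) * (Tmat M N (ℓ j) (s j))ᴴ) r r'‖ ^ 2 = 1 := by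
  intro r i j hij
  have hdiag := Tmat_mul_conjTranspose_apply_self (hℓ i) (hℓ j) (hdist i j hij) (s i) (s j) r
  refine ⟨by rw [hdiag, norm_zero, zero_pow two_ne_zero], ?_⟩
  rw [Finset.sum_sdiff_eq_sub (Finset.subset_univ _), Finset.sum_singleton, hdiag, sub_zero,
    norm_sum_Tmat_mul_conjTranspose_apply, one_pow]

open Finset in
/-- **Remark 2** (combining Lemmas 2 and 3). If the delay indices `ℓ₁,…,ℓ_L ∈ {0,…,M-1}`
are pairwise distinct, then for every row index `r` and all `i ≠ j`:
`χ^{ij} = |[T^(i) T^(j)†]_{(r,r)}|² = 0` and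
`κ^{ij} = |∑_{r'≠r} [T^(i) T^(j)†]_{(r,r')}|² = 1`. -/
theorem chi_eq_zero_and_kappa_eq_one (M N : ℕ) (hM : 0 < M) (hN : 0 < N)
    (L : ℕ) (ℓ : Fin L → ℕ) (hℓ : ∀ i, ℓ i < M)
    (hdist : ∀ i j : Fin L, i ≠ j → ℓ i ≠ ℓ j) (s : Fin L → ℝ) :
    ∀ (r : Fin (M * N)) (i j : Fin L), i ≠ j →
      ‖(Tmat M N (ℓ i) (s i) * (Tmat M N (ℓ j) (s j))ᴴ) r r‖ ^ 2 = 0 ∧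
      ‖∑ r' ∈ Finset.univ \ {r},
        (Tmat M N (ℓ i) (s i) * (Tmat M N (ℓ j) (s j))ᴴ) r r'‖ ^ 2 = 1 :=
  chi_eq_zero_and_kappa_eq_one_general M N L ℓ hℓ hdist s

end
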